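/- arXiv:2505.14457 — 4 statements merged into one kernel-verified Lean document; each statement's English description precedes it below -/
import Mathlib

section
/- Let f : ℝⁿ → ℝⁿ be continuous with f(0) = 0, and suppose there exist a continuously differentiable function V : ℝⁿ → ℝ and constants c, r > 0 such that V(0) = 0, V(x) > 0 for all x ≠ 0, ∇V(x)·f(x) < 0 for all x ≠ 0, and ∇V(x)·f(x) < -c for all x with ‖x‖ ≥ r. Then the origin is a globally asymptotically stable equilibrium of ẋ = f(x): it is Lyapunov stable and every solution converges to 0 as t → ∞. -/
/-!
Along a solution `V` is nonincreasing (its derivative vanishes at its minimum `0`), so a solution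
starting where `V` is below the minimum of `V` on the sphere of radius `ε` never reaches that
sphere: this is stability. For attractivity, `V ≥ 0` cannot stay above a level `L > 0` forever,
because on `{L ≤ V} ∩ closedBall 0 r` (compact, away from `0`) and outside `closedBall 0 r` the
derivative of `V` along `f` is bounded by a negative constant; likewise a solution cannot stay
outside `closedBall 0 r`. Once `V` is below the minimum of `V` on the shell
`ε ≤ ‖y‖ ≤ max r ε` and the solution re-enters `closedBall 0 r`, it is inside the `ε`-ball and
stays there.
-/

open Set Metric Filter Topology

theorem norm_lt_of_forall_lt_of_le_on_sphere {E : Type*} [NormedAddCommGroup E]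
    {x : ℝ → E} {W : E → ℝ} {s ρ m : ℝ} (hx : ContinuousOn x (Ici s)) (hs : ‖x s‖ < ρ)
    (hW : ∀ t, s ≤ t → W (x t) < m) (hsphere : ∀ y, ‖y‖ = ρ → m ≤ W y) {t : ℝ} (ht : s ≤ t) :
    ‖x t‖ < ρ := by
  by_contra! hρt
  obtain ⟨τ, hτ, hτρ⟩ := intermediate_value_Icc ht ((hx.mono Icc_subset_Ici_self).norm)
    ⟨hs.le, hρt⟩
  exact (hW τ hτ.1).not_ge (hsphere _ hτρ)

section Lyapunov

variable {E : Type*} [NormedAddCommGroup E] [NormedSpace ℝ E]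
  {f : E → E} {V : E → ℝ} {x : ℝ → E}

theorem fderiv_apply_nonpos_of_forall_le (hmin : ∀ y, V 0 ≤ V y)
    (hdec : ∀ y, y ≠ 0 → fderiv ℝ V y (f y) < 0) (y : E) : fderiv ℝ V y (f y) ≤ 0 := by
  rcases eq_or_ne y 0 with rfl | hy
  · have : IsLocalMin V 0 := Eventually.of_forall hmin
    simp [this.fderiv_eq_zero]
  · exact (hdec y hy).le

theorem sub_le_of_fderiv_apply_le (hV : Differentiable ℝ V)
    (hx : ∀ t, 0 ≤ t → HasDerivAt x (f (x t)) t) {a b k : ℝ} (ha : 0 ≤ a) (hab : a ≤ b)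
    (hk : ∀ t ∈ Icc a b, fderiv ℝ V (x t) (f (x t)) ≤ -k) :
    V (x b) ≤ V (x a) - k * (b - a) := by
  have hderiv : ∀ t ∈ Icc a b, HasDerivAt (V ∘ x) (fderiv ℝ V (x t) (f (x t))) t :=
    fun t ht => (hV _).hasFDerivAt.comp_hasDerivAt t (hx t (ha.trans ht.1))
  have := (convex_Icc a b).image_sub_le_mul_sub_of_deriv_le
    (fun t ht => (hderiv t ht).continuousAt.continuousWithinAt)
    (fun t ht => (hderiv t (interior_subset ht)).differentiableAt.differentiableWithinAt)
    (fun t ht => (hderiv t (interior_subset ht)).deriv ▸ hk t (interior_subset ht))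
    a (left_mem_Icc.2 hab) b (right_mem_Icc.2 hab) hab
  simp only [Function.comp_apply] at this
  linarith

theorem antitoneOn_comp_of_fderiv_apply_nonpos (hV : Differentiable ℝ V)
    (hx : ∀ t, 0 ≤ t → HasDerivAt x (f (x t)) t) (hneg : ∀ y, fderiv ℝ V y (f y) ≤ 0) :
    AntitoneOn (V ∘ x) (Ici 0) := fun s hs t _ hst => by
  simpa using sub_le_of_fderiv_apply_le (k := 0) hV hx hs hst (fun u _ => by simpa using hneg _)

theorem exists_ge_notMem_of_fderiv_apply_le (hV : Differentiable ℝ V)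
    (hx : ∀ t, 0 ≤ t → HasDerivAt x (f (x t)) t) (hV_nonneg : ∀ y, 0 ≤ V y) {S : Set E}
    {k : ℝ} (hk : 0 < k) (hS : ∀ y ∈ S, fderiv ℝ V y (f y) ≤ -k) {T : ℝ} (hT : 0 ≤ T) :
    ∃ t ≥ T, x t ∉ S := by
  by_contra! hstay
  set t := T + (V (x T) + 1) / k
  have hTt : T ≤ t := le_add_of_nonneg_right (by have := hV_nonneg (x T); positivity)
  have hdecay := sub_le_of_fderiv_apply_le hV hx hT hTt (fun u hu => hS _ (hstay u hu.1))
  have hlen : k * (t - T) = V (x T) + 1 := by simp only [t]; field_simp; ring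
  linarith [hV_nonneg (x t)]

variable [ProperSpace E]

theorem exists_fderiv_apply_le_neg_of_le (hV : ContDiff ℝ 1 V) (hf : Continuous f)
    (hV0 : V 0 = 0) (hdec : ∀ y, y ≠ 0 → fderiv ℝ V y (f y) < 0) {c r : ℝ} (hc : 0 < c)
    (hdecc : ∀ y, r ≤ ‖y‖ → fderiv ℝ V y (f y) < -c) {L : ℝ} (hL : 0 < L) :
    ∃ k > 0, ∀ y, L ≤ V y → fderiv ℝ V y (f y) ≤ -k := by
  have hK : IsCompact (closedBall (0 : E) r ∩ {y | L ≤ V y}) :=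
    (isCompact_closedBall 0 r).inter_right (isClosed_le continuous_const hV.continuous)
  have hderiv : Continuous fun y => fderiv ℝ V y (f y) :=
    (hV.continuous_fderiv one_ne_zero).clm_apply hf
  obtain ⟨k, hk, hkK⟩ := hK.exists_forall_le' (f := fun y => -fderiv ℝ V y (f y))
    hderiv.neg.continuousOn fun y hy =>
      neg_pos.2 <| hdec y fun h => by simpa [h, hV0] using hL.trans_le hy.2
  refine ⟨min k c, lt_min hk hc, fun y hy => ?_⟩
  rcases le_or_gt r ‖y‖ with hry | hry
  · linarith [(hdecc y hry).le, min_le_right k c]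
  · linarith [hkK y ⟨mem_closedBall_zero_iff.2 hry.le, hy⟩, min_le_left k c]

theorem exists_forall_norm_le_of_lyapunov (hV : ContDiff ℝ 1 V) (hV0 : V 0 = 0)
    (hVpos : ∀ y, y ≠ 0 → 0 < V y) (hdec : ∀ y, y ≠ 0 → fderiv ℝ V y (f y) < 0)
    {ε : ℝ} (hε : 0 < ε) :
    ∃ δ > 0, ∀ x : ℝ → E, (∀ t, 0 ≤ t → HasDerivAt x (f (x t)) t) → ‖x 0‖ ≤ δ →
      ∀ t, 0 ≤ t → ‖x t‖ ≤ ε := by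
  have hV_nonneg : ∀ y, 0 ≤ V y := fun y => by
    rcases eq_or_ne y 0 with rfl | hy
    exacts [hV0.ge, (hVpos y hy).le]
  obtain ⟨m, hm, hmS⟩ := (isCompact_sphere (0 : E) ε).exists_forall_le'
    hV.continuous.continuousOn fun y hy => hVpos y (ne_zero_of_mem_sphere hε.ne' ⟨y, hy⟩)
  have hnear : ∀ᶠ y in 𝓝 (0 : E), V y < m ∧ ‖y‖ < ε :=
    (hV.continuous.tendsto' 0 0 hV0 |>.eventually_lt_const hm).and
      (continuous_norm.tendsto' 0 0 norm_zero |>.eventually_lt_const hε)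
  obtain ⟨δ, hδ, hball⟩ := nhds_basis_closedBall.eventually_iff.1 hnear
  refine ⟨δ, hδ, fun x hx hx0 t ht => ?_⟩
  have hx0' := hball (mem_closedBall_zero_iff.2 hx0)
  have hanti := antitoneOn_comp_of_fderiv_apply_nonpos (hV.differentiable one_ne_zero) hx
    (fderiv_apply_nonpos_of_forall_le (fun y => hV0 ▸ hV_nonneg y) hdec)
  refine (norm_lt_of_forall_lt_of_le_on_sphere
    (fun u hu => (hx u hu).continuousAt.continuousWithinAt) hx0'.2
    (fun u hu => (hanti self_mem_Ici hu hu).trans_lt hx0'.1)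
    (fun y hy => hmS y (mem_sphere_zero_iff_norm.2 hy)) ht).le

theorem tendsto_zero_of_lyapunov (hV : ContDiff ℝ 1 V) (hf : Continuous f) (hV0 : V 0 = 0)
    (hVpos : ∀ y, y ≠ 0 → 0 < V y) (hdec : ∀ y, y ≠ 0 → fderiv ℝ V y (f y) < 0) {c r : ℝ}
    (hc : 0 < c) (hdecc : ∀ y, r ≤ ‖y‖ → fderiv ℝ V y (f y) < -c)
    (hx : ∀ t, 0 ≤ t → HasDerivAt x (f (x t)) t) : Tendsto x atTop (𝓝 0) := by
  have hV_nonneg : ∀ y, 0 ≤ V y := fun y => by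
    rcases eq_or_ne y 0 with rfl | hy
    exacts [hV0.ge, (hVpos y hy).le]
  have hVd := hV.differentiable one_ne_zero
  have hanti := antitoneOn_comp_of_fderiv_apply_nonpos hVd hx
    (fderiv_apply_nonpos_of_forall_le (fun y => hV0 ▸ hV_nonneg y) hdec)
  have hvisit : ∀ T, 0 ≤ T → ∃ t ≥ T, ‖x t‖ < r := fun T hT => by
    simpa using exists_ge_notMem_of_fderiv_apply_le hVd hx hV_nonneg hc
      (S := {y | r ≤ ‖y‖}) (fun y hy => (hdecc y hy).le) hT
  have hsmall : ∀ L > 0, ∃ T ≥ 0, ∀ t ≥ T, V (x t) < L := fun L hL => by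
    obtain ⟨k, hk, hkL⟩ := exists_fderiv_apply_le_neg_of_le hV hf hV0 hdec hc hdecc hL
    obtain ⟨T, hT, hxT⟩ := exists_ge_notMem_of_fderiv_apply_le hVd hx hV_nonneg hk
      (S := {y | L ≤ V y}) hkL le_rfl
    exact ⟨T, hT, fun t ht => (hanti hT (hT.trans ht) ht).trans_lt (not_le.1 hxT)⟩
  rw [NormedAddGroup.tendsto_nhds_zero]
  intro ε hε
  have hshell : ∀ y : E, ε ≤ ‖y‖ → ‖y‖ ≤ max r ε → y ∈ closedBall 0 (max r ε) \ ball 0 ε :=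
    fun y h₁ h₂ => ⟨mem_closedBall_zero_iff.2 h₂, by simpa using h₁⟩
  obtain ⟨m, hm, hmA⟩ := ((isCompact_closedBall (0 : E) _).diff isOpen_ball).exists_forall_le'
    hV.continuous.continuousOn fun y hy =>
      hVpos y fun h => hy.2 (by rw [h]; exact mem_ball_self hε)
  obtain ⟨T, hT, hVT⟩ := hsmall m hm
  obtain ⟨T', hTT', hT'r⟩ := hvisit T hT
  have hT'ε : ‖x T'‖ < ε := by
    by_contra! h
    exact (hVT T' hTT').not_ge (hmA _ (hshell _ h (hT'r.le.trans (le_max_left _ _))))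
  refine eventually_atTop.2 ⟨T', fun t ht => norm_lt_of_forall_lt_of_le_on_sphere
    (fun u hu => (hx u (hT.trans (hTT'.trans hu))).continuousAt.continuousWithinAt) hT'ε
    (fun u hu => hVT u (hTT'.trans hu))
    (fun y hy => hmA y (hshell y hy.ge (hy.le.trans (le_max_right _ _)))) ht⟩

end Lyapunov

theorem stmt_0_general {n : ℕ}
    (f : EuclideanSpace ℝ (Fin n) → EuclideanSpace ℝ (Fin n))
    (hf : Continuous f)
    (V : EuclideanSpace ℝ (Fin n) → ℝ) (hV : ContDiff ℝ 1 V)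
    (c r : ℝ) (hc : 0 < c)
    (hV0 : V 0 = 0) (hVpos : ∀ x, x ≠ 0 → 0 < V x)
    (hdec : ∀ x, x ≠ 0 → fderiv ℝ V x (f x) < 0)
    (hdecc : ∀ x, r ≤ ‖x‖ → fderiv ℝ V x (f x) < -c) :
    (∀ ε > 0, ∃ δ > 0, ∀ x : ℝ → EuclideanSpace ℝ (Fin n),
        (∀ t, 0 ≤ t → HasDerivAt x (f (x t)) t) → ‖x 0‖ ≤ δ →
        ∀ t, 0 ≤ t → ‖x t‖ ≤ ε) ∧
    (∀ x : ℝ → EuclideanSpace ℝ (Fin n),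
        (∀ t, 0 ≤ t → HasDerivAt x (f (x t)) t) →
        Filter.Tendsto x Filter.atTop (nhds 0)) :=
  ⟨fun _ hε => exists_forall_norm_le_of_lyapunov hV hV0 hVpos hdec hε,
    fun _ hx => tendsto_zero_of_lyapunov hV hf hV0 hVpos hdec hc hdecc hx⟩

/-- Lemma 1 of the paper: global asymptotic stability without radial unboundedness. -/
theorem stmt_0 {n : ℕ}
    (f : EuclideanSpace ℝ (Fin n) → EuclideanSpace ℝ (Fin n))
    (hf : Continuous f) (hf0 : f 0 = 0)
    (V : EuclideanSpace ℝ (Fin n) → ℝ) (hV : ContDiff ℝ 1 V)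
    (c r : ℝ) (hc : 0 < c) (hr : 0 < r)
    (hV0 : V 0 = 0) (hVpos : ∀ x, x ≠ 0 → 0 < V x)
    (hdec : ∀ x, x ≠ 0 → fderiv ℝ V x (f x) < 0)
    (hdecc : ∀ x, r ≤ ‖x‖ → fderiv ℝ V x (f x) < -c) :
    (∀ ε > 0, ∃ δ > 0, ∀ x : ℝ → EuclideanSpace ℝ (Fin n),
        (∀ t, 0 ≤ t → HasDerivAt x (f (x t)) t) → ‖x 0‖ ≤ δ →
        ∀ t, 0 ≤ t → ‖x t‖ ≤ ε) ∧
    (∀ x : ℝ → EuclideanSpace ℝ (Fin n),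
        (∀ t, 0 ≤ t → HasDerivAt x (f (x t)) t) →
        Filter.Tendsto x Filter.atTop (nhds 0)) :=
  stmt_0_general f hf V hV c r hc hV0 hVpos hdec hdecc
end

section
/- Define f : ℝ² → ℝ² by f(x₁,x₂) = ((-x₁ - x₂)(1 + x₁²)², x₁ - x₂) and V(x₁,x₂) = x₁²/(1 + x₁²) + x₂². Then V and f satisfy the hypotheses of the paper's global-stability lemma: V(0)=0, V(x)>0 for x≠0, ∇V(x)·f(x) = -2‖x‖² < 0 for x≠0, and for any r > 0, ∇V(x)·f(x) ≤ -2r² for all ‖x‖ ≥ r. -/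
/-!
`V` is a sum of functions of the separate coordinates, so its derivative along `f` is
`2x₁/(1+x₁²)² · f₁ + 2x₂ · f₂`. The factor `(1+x₁²)²` in `f₁` cancels the denominator, and the
cross terms `∓2x₁x₂` cancel, leaving `-2(x₁² + x₂²) = -2‖x‖²`.
-/

lemma EuclideanSpace.norm_sq_fin_two (x : EuclideanSpace ℝ (Fin 2)) :
    ‖x‖ ^ 2 = x 0 ^ 2 + x 1 ^ 2 := by
  simp [EuclideanSpace.norm_sq_eq, Fin.sum_univ_two]

lemma EuclideanSpace.fderiv_sum_comp_apply {ι : Type*} [Fintype ι] {g : ι → ℝ → ℝ} {g' : ι → ℝ}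
    {x : EuclideanSpace ℝ ι} (hg : ∀ i, HasDerivAt (g i) (g' i) (x i)) (v : EuclideanSpace ℝ ι) :
    fderiv ℝ (fun y : EuclideanSpace ℝ ι => ∑ i, g i (y i)) x v = ∑ i, g' i * v i := by
  have hsum := HasFDerivAt.sum (u := Finset.univ) fun i _ =>
    (hg i).comp_hasFDerivAt x (EuclideanSpace.proj (𝕜 := ℝ) i).hasFDerivAt
  rw [show (fun y : EuclideanSpace ℝ ι => ∑ i, g i (y i)) = ∑ i, (g i ∘ EuclideanSpace.proj i) by
    ext y; simp, hsum.fderiv]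
  simp

lemma hasDerivAt_sq_div_one_add_sq (t : ℝ) :
    HasDerivAt (fun s : ℝ => s ^ 2 / (1 + s ^ 2)) (2 * t / (1 + t ^ 2) ^ 2) t := by
  refine ((hasDerivAt_pow 2 t).div ((hasDerivAt_pow 2 t).const_add 1) (by positivity)).congr_deriv ?_
  ring

lemma sq_div_one_add_sq_add_sq_pos {a b : ℝ} (h : 0 < a ^ 2 + b ^ 2) :
    0 < a ^ 2 / (1 + a ^ 2) + b ^ 2 := by
  have hden : 0 < 1 + a ^ 2 := by positivity
  calc 0 < (a ^ 2 + b ^ 2) / (1 + a ^ 2) := div_pos h hden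
    _ ≤ a ^ 2 / (1 + a ^ 2) + b ^ 2 := by
      rw [add_div]
      gcongr
      exact div_le_self (sq_nonneg b) (by nlinarith)

/-- The example satisfies all hypotheses of the global-stability lemma. -/
theorem stmt_6
    (f : EuclideanSpace ℝ (Fin 2) → EuclideanSpace ℝ (Fin 2))
    (hf : ∀ x, f x = ![(-(x 0) - x 1) * (1 + (x 0) ^ 2) ^ 2, x 0 - x 1])
    (V : EuclideanSpace ℝ (Fin 2) → ℝ)
    (hV : ∀ x, V x = (x 0) ^ 2 / (1 + (x 0) ^ 2) + (x 1) ^ 2) :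
    V 0 = 0 ∧ (∀ x, x ≠ 0 → 0 < V x) ∧
    (∀ x, fderiv ℝ V x (f x) = -2 * ‖x‖ ^ 2) ∧
    (∀ x, x ≠ 0 → fderiv ℝ V x (f x) < 0) ∧
    (∀ r : ℝ, 0 < r → ∀ x, r ≤ ‖x‖ → fderiv ℝ V x (f x) ≤ -2 * r ^ 2) := by
  have hV_sum : V = fun y => ∑ i, ![fun s : ℝ => s ^ 2 / (1 + s ^ 2), fun s => s ^ 2] i (y i) := by
    ext y; simp [hV, Fin.sum_univ_two]
  have hV_deriv (x : EuclideanSpace ℝ (Fin 2)) : fderiv ℝ V x (f x) = -2 * ‖x‖ ^ 2 := by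
    have hg : ∀ i, HasDerivAt (![fun s : ℝ => s ^ 2 / (1 + s ^ 2), fun s => s ^ 2] i)
        (![2 * x 0 / (1 + x 0 ^ 2) ^ 2, 2 * x 1] i) (x i) := by
      simpa [Fin.forall_fin_two] using
        ⟨hasDerivAt_sq_div_one_add_sq (x 0), by simpa using hasDerivAt_pow 2 (x 1)⟩
    rw [hV_sum, EuclideanSpace.fderiv_sum_comp_apply hg, hf, EuclideanSpace.norm_sq_fin_two]
    simp only [Fin.sum_univ_two, Matrix.cons_val_zero, Matrix.cons_val_one, Matrix.cons_val_fin_one]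
    field_simp
    ring
  have hnorm_pos {x : EuclideanSpace ℝ (Fin 2)} (hx : x ≠ 0) : 0 < ‖x‖ ^ 2 := by positivity
  refine ⟨by simp [hV], fun x hx => ?_, hV_deriv, fun x hx => ?_, fun r hr x hx => ?_⟩
  · rw [hV]
    exact sq_div_one_add_sq_add_sq_pos (EuclideanSpace.norm_sq_fin_two x ▸ hnorm_pos hx)
  · rw [hV_deriv]
    linarith [hnorm_pos hx]
  · rw [hV_deriv]
    linarith [pow_le_pow_left₀ hr.le hx 2]
end

section
/- Let N ∈ ℝ^{(1+r)×(1+r)} be symmetric with block partition N = [[N₁₁, N₁₂],[N₂₁, N₂₂]] where N₁₁ ∈ ℝ and N₂₂ ∈ ℝ^{r×r} is negative definite, and suppose the Schur complement N|N₂₂ := N₁₁ - N₁₂N₂₂⁻¹N₂₁ is nonnegative. Let a ∈ ℝ and λ ∈ ℝ^r. Then λᵀz + a ≥ 0 for all z in the set Z = {z ∈ ℝ^r : (1,z)ᵀ N (1,z) ≥ 0} if and only if the matrix [[-λᵀN₂₂⁻¹N₂₁ + a, (N|N₂₂)^{1/2} λᵀ],[(N|N₂₂)^{1/2} λ, (λᵀN₂₂⁻¹N₂₁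 - a) N₂₂]] is positive semidefinite. -/
/-!
Write `Q v = -vᵀN₂₂v`, a positive definite form, `s = N|N₂₂` and `c = -N₂₂⁻¹N₂₁`. Completing the
square gives `(1,z)ᵀN(1,z) = s - Q(z - c)`, so `Z` is the ellipsoid `Q(z - c) ≤ s` and the linear
inequality on `Z` reads `α + λᵀv ≥ 0` whenever `Q v ≤ s`, with `α = λᵀc + a`. Testing the boundary
points `±√(s / Q v) • v` turns this into `√s |λᵀv| ≤ α √(Q v)`, which by AM-GM gives
nonnegativity of the quadratic form `α t² + 2√s t λᵀv + α Q v` of the bordered matrix. Conversely,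
evaluating that form at `t = √s` bounds it by `2s(α + λᵀv)` on the ellipsoid.
-/

open Matrix

lemma quadratic_nonneg_of_abs_le {α b q : ℝ} (hα : 0 ≤ α) (h : |b| ≤ α * q) (t : ℝ) :
    0 ≤ α * t ^ 2 + 2 * b * t + α * q ^ 2 := by
  have hbt : -(|b| * |t|) ≤ b * t := by rw [← abs_mul]; exact neg_abs_le _
  have hb : |b| * |t| ≤ α * q * |t| := mul_le_mul_of_nonneg_right h (abs_nonneg t)
  nlinarith [mul_nonneg hα (sq_nonneg (|t| - q)), sq_abs t]

namespace QuadraticMap.PosDef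

variable {V : Type*} [AddCommGroup V] [Module ℝ V] {Q : QuadraticForm ℝ V}
  (L : V →ₗ[ℝ] ℝ) {s : ℝ} (α : ℝ)

lemma abs_sqrt_mul_le_mul_sqrt (hQ : Q.PosDef) (hs : 0 ≤ s)
    (H : ∀ v, Q v ≤ s → 0 ≤ α + L v) (v : V) : |√s * L v| ≤ α * √(Q v) := by
  rcases eq_or_ne v 0 with rfl | hv
  · simp
  have hp : 0 < √(Q v) := Real.sqrt_pos.mpr (hQ v hv)
  set k := √s / √(Q v)
  have hk₀ : 0 ≤ k := by positivity
  have hkp : k * √(Q v) = √s := div_mul_cancel₀ _ hp.ne'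
  have hk : Q (k • v) = s := by
    rw [QuadraticMap.map_smul, smul_eq_mul, ← Real.mul_self_sqrt (hQ.nonneg v),
      ← Real.mul_self_sqrt hs, ← hkp]
    ring
  have h₁ := H (k • v) hk.le
  have h₂ := H (-k • v) (by rw [neg_smul, QuadraticMap.map_neg, hk])
  rw [map_smul, smul_eq_mul] at h₁ h₂
  have hkL : |k * L v| ≤ α := abs_le.mpr ⟨by linarith, by linarith⟩
  calc |√s * L v| = |k * L v| * √(Q v) := by
        rw [abs_mul, abs_mul, abs_of_nonneg (Real.sqrt_nonneg s), abs_of_nonneg hk₀, ← hkp]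
        ring
    _ ≤ α * √(Q v) := mul_le_mul_of_nonneg_right hkL hp.le

theorem forall_le_imp_nonneg_add_iff (hQ : Q.PosDef) (hs : 0 ≤ s) :
    (∀ v, Q v ≤ s → 0 ≤ α + L v) ↔
      ∀ t v, 0 ≤ α * t ^ 2 + 2 * (√s * L v) * t + α * Q v := by
  constructor
  · intro H t v
    have hα : 0 ≤ α := by simpa using H 0 (by simpa using hs)
    have := quadratic_nonneg_of_abs_le hα (hQ.abs_sqrt_mul_le_mul_sqrt L α hs H v) t
    rwa [Real.sq_sqrt (hQ.nonneg v)] at this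
  · intro H v hv
    have hα : 0 ≤ α := by simpa using H 1 0
    rcases hs.eq_or_lt with rfl | hs
    · simp [hQ.le_zero_iff.mp hv, hα]
    have := H (√s) v
    rw [Real.sq_sqrt hs.le] at this
    nlinarith [Real.mul_self_sqrt hs.le]

end QuadraticMap.PosDef

namespace Matrix

variable {R n : Type*}

def bordered (x : R) (b : n → R) (D : Matrix n n R) : Matrix (Fin 1 ⊕ n) (Fin 1 ⊕ n) R :=
  fromBlocks (of fun _ _ => x) (of fun _ j => b j) (of fun i _ => b i) D

section CommRing

variable [CommRing R] [Fintype n]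

lemma sumElim_dotProduct_bordered_mulVec (x : R) (b : n → R) (D : Matrix n n R) (t : R)
    (v : n → R) :
    Sum.elim (fun _ : Fin 1 => t) v ⬝ᵥ bordered x b D *ᵥ Sum.elim (fun _ => t) v =
      x * t ^ 2 + 2 * (b ⬝ᵥ v) * t + v ⬝ᵥ D *ᵥ v := by
  have hx : (of fun _ _ => x : Matrix (Fin 1) (Fin 1) R) *ᵥ (fun _ => t) = fun _ => x * t := by
    ext; simp [mulVec, dotProduct]
  have hrow : (of fun _ j => b j : Matrix (Fin 1) n R) *ᵥ v = fun _ => b ⬝ᵥ v := rfl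
  have hcol : (of fun i _ => b i : Matrix n (Fin 1) R) *ᵥ (fun _ => t) = t • b := by
    ext; simp [mulVec, dotProduct, mul_comm]
  simp only [bordered, fromBlocks_mulVec, Sum.elim_comp_inl, Sum.elim_comp_inr,
    sumElim_dotProduct_sumElim, dotProduct_add, hx, hrow, hcol, dotProduct_smul, smul_eq_mul,
    dotProduct_comm v b]
  simp only [dotProduct, Finset.univ_unique, Finset.sum_singleton]
  ring

lemma sumElim_one_dotProduct_bordered_mulVec [DecidableEq n] (x : R) (b : n → R)
    {D : Matrix n n R} (hD : D.IsSymm) (hdet : IsUnit D.det) (z : n → R) :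
    Sum.elim (fun _ : Fin 1 => 1) z ⬝ᵥ bordered x b D *ᵥ Sum.elim (fun _ => 1) z =
      (x - b ⬝ᵥ D⁻¹ *ᵥ b) + (z + D⁻¹ *ᵥ b) ⬝ᵥ D *ᵥ (z + D⁻¹ *ᵥ b) := by
  have hb : D *ᵥ D⁻¹ *ᵥ b = b := by rw [mulVec_mulVec, mul_nonsing_inv _ hdet, one_mulVec]
  have hsymm : D⁻¹ *ᵥ b ⬝ᵥ D *ᵥ z = b ⬝ᵥ z := by
    rw [dotProduct_mulVec, ← mulVec_transpose, hD, hb]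
  rw [sumElim_dotProduct_bordered_mulVec, mulVec_add, dotProduct_add, add_dotProduct,
    add_dotProduct, hb, hsymm, dotProduct_comm z b, dotProduct_comm (D⁻¹ *ᵥ b) b]
  ring

end CommRing

lemma posSemidef_bordered_iff [CommRing R] [PartialOrder R] [StarRing R] [TrivialStar R]
    [Fintype n] (x : R) (b : n → R) {D : Matrix n n R} (hD : D.IsSymm) :
    (bordered x b D).PosSemidef ↔ ∀ t v, 0 ≤ x * t ^ 2 + 2 * (b ⬝ᵥ v) * t + v ⬝ᵥ D *ᵥ v := by
  have hherm : (bordered x b D).IsHermitian := by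
    rw [IsHermitian, conjTranspose_eq_transpose_of_trivial]
    exact IsSymm.fromBlocks (by ext; rfl) (by ext; rfl) hD
  simp only [posSemidef_iff_dotProduct_mulVec, hherm, true_and, star_trivial]
  refine ⟨fun h t v => ?_, fun h w => ?_⟩
  · simpa only [sumElim_dotProduct_bordered_mulVec] using h (Sum.elim (fun _ => t) v)
  · have hw : w = Sum.elim (fun _ => w (.inl 0)) (w ∘ .inr) := by
      ext (i | i)
      · rw [Subsingleton.elim i 0]; rfl
      · rfl
    rw [hw, sumElim_dotProduct_bordered_mulVec]
    exact h _ _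

end Matrix

/-- Specialized S-lemma (Lemma 2 of the paper). -/
theorem stmt_8 {r : ℕ} (N₁₁ : ℝ) (N₂₁ : Fin r → ℝ) (N₂₂ : Matrix (Fin r) (Fin r) ℝ)
    (hsym : N₂₂.IsSymm)
    (hneg : ∀ z : Fin r → ℝ, z ≠ 0 → z ⬝ᵥ N₂₂ *ᵥ z < 0)
    (hschur : 0 ≤ N₁₁ - N₂₁ ⬝ᵥ N₂₂⁻¹ *ᵥ N₂₁)
    (a : ℝ) (lam : Fin r → ℝ) :
    (∀ z : Fin r → ℝ,
        0 ≤ (Sum.elim (fun _ : Fin 1 => (1 : ℝ)) z) ⬝ᵥ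
            (Matrix.fromBlocks (Matrix.of fun _ _ => N₁₁)
              (Matrix.of fun _ j => N₂₁ j) (Matrix.of fun i _ => N₂₁ i) N₂₂) *ᵥ
            (Sum.elim (fun _ : Fin 1 => (1 : ℝ)) z) →
        0 ≤ lam ⬝ᵥ z + a)
    ↔ (Matrix.fromBlocks
        (Matrix.of fun _ _ : Fin 1 => -(lam ⬝ᵥ N₂₂⁻¹ *ᵥ N₂₁) + a)
        (Matrix.of fun _ j => Real.sqrt (N₁₁ - N₂₁ ⬝ᵥ N₂₂⁻¹ *ᵥ N₂₁) * lam j)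
        (Matrix.of fun i _ => Real.sqrt (N₁₁ - N₂₁ ⬝ᵥ N₂₂⁻¹ *ᵥ N₂₁) * lam i)
        ((lam ⬝ᵥ N₂₂⁻¹ *ᵥ N₂₁ - a) • N₂₂)).PosSemidef := by
  set s := N₁₁ - N₂₁ ⬝ᵥ N₂₂⁻¹ *ᵥ N₂₁
  set α := -(lam ⬝ᵥ N₂₂⁻¹ *ᵥ N₂₁) + a with hα
  change (∀ z, 0 ≤ _ ⬝ᵥ bordered N₁₁ N₂₁ N₂₂ *ᵥ _ → _) ↔ (bordered α (√s • lam) _).PosSemidef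
  set Q := (-N₂₂).toQuadraticForm'
  have hQ_apply (v : Fin r → ℝ) : Q v = -(v ⬝ᵥ N₂₂ *ᵥ v) := by
    simp [Q, toQuadraticForm', toLinearMap₂'_apply']
  have hQ : Q.PosDef := fun v hv => by simpa [hQ_apply] using hneg v hv
  have hdet : IsUnit N₂₂.det := by
    have : (-N₂₂).PosDef := .of_toQuadraticForm' hsym.neg hQ
    simpa [isUnit_iff_isUnit_det] using this.isUnit.neg
  set L := dotProductEquiv ℝ (Fin r) lam
  have hL (v : Fin r → ℝ) : L v = lam ⬝ᵥ v := rfl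
  have hconstraint : (∀ z, 0 ≤ Sum.elim (fun _ : Fin 1 => 1) z ⬝ᵥ bordered N₁₁ N₂₁ N₂₂ *ᵥ
      Sum.elim (fun _ => 1) z → 0 ≤ lam ⬝ᵥ z + a) ↔ ∀ v, Q v ≤ s → 0 ≤ α + L v := by
    refine (Equiv.addRight (N₂₂⁻¹ *ᵥ N₂₁)).forall_congr fun {z} => ?_
    simp only [sumElim_one_dotProduct_bordered_mulVec _ _ hsym hdet, Equiv.coe_addRight, hQ_apply,
      hL, dotProduct_add]
    refine imp_congr ⟨fun h => ?_, fun h => ?_⟩ ⟨fun h => ?_, fun h => ?_⟩ <;> linarith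
  have hmatrix : (bordered α (√s • lam) ((lam ⬝ᵥ N₂₂⁻¹ *ᵥ N₂₁ - a) • N₂₂)).PosSemidef ↔
      ∀ t v, 0 ≤ α * t ^ 2 + 2 * (√s * L v) * t + α * Q v := by
    rw [posSemidef_bordered_iff _ _ (hsym.smul _)]
    refine forall₂_congr fun t v => Iff.of_eq (congrArg _ ?_)
    rw [smul_dotProduct, smul_mulVec, dotProduct_smul, hQ_apply, hL, hα]
    simp only [smul_eq_mul]
    ring
  rw [hconstraint, hmatrix]
  exact hQ.forall_le_imp_nonneg_add_iff L α hschur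
end

section
/- Let V : ℝ² → ℝ be given by V(x) = η(x)/d(x₁) where η(x) = 3.5x₁² + x₁x₂ + x₂² - 2x₁³ - 2x₁²x₂ + 2x₁⁴ and d(x₁) = 3.25 - x₁ + x₁². Then V(0) = 0 and V(x) > 0 for all x ≠ 0. -/
/-- Positive definiteness of the Lyapunov function of Example 1. -/
theorem stmt_17 (V : ℝ × ℝ → ℝ)
    (hV : ∀ x : ℝ × ℝ, V x =
      (3.5 * x.1 ^ 2 + x.1 * x.2 + x.2 ^ 2 - 2 * x.1 ^ 3 - 2 * x.1 ^ 2 * x.2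
        + 2 * x.1 ^ 4) / (3.25 - x.1 + x.1 ^ 2)) :
    V 0 = 0 ∧ ∀ x : ℝ × ℝ, x ≠ 0 → 0 < V x := by
  constructor
  · rw [hV]; norm_num
  · intro x hx
    rw [hV]
    have hd : 0 < 3.25 - x.1 + x.1 ^ 2 := by nlinarith [sq_nonneg (x.1 - 0.5)]
    apply div_pos _ hd
    have key : 3.5 * x.1 ^ 2 + x.1 * x.2 + x.2 ^ 2 - 2 * x.1 ^ 3 - 2 * x.1 ^ 2 * x.2
        + 2 * x.1 ^ 4 = (x.2 + x.1 / 2 - x.1 ^ 2) ^ 2 + x.1 ^ 2 * (3.25 - x.1 + x.1 ^ 2) := by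
      ring
    rw [key]
    rcases eq_or_ne x.1 0 with h1 | h1
    · have h2 : x.2 ≠ 0 := by
        intro h2; exact hx (Prod.ext h1 h2)
      rw [h1]
      have : (0:ℝ) < x.2 ^ 2 := by positivity
      nlinarith
    · have : 0 < x.1 ^ 2 * (3.25 - x.1 + x.1 ^ 2) := by positivity
      nlinarith [sq_nonneg (x.2 + x.1 / 2 - x.1 ^ 2)]
end
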